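/- In the two-knapsack setting, assume additionally that ∑_{i=1}^n a_i u_i > b, ∑_{i=1}^{n−1} w_i u_i + (θ_n − 1)·w_n ≥ d, and γ_n ≤ θ_n − 2. Then conv(K^≤ ∩ K^≥) = {x ∈ conv(K^≤) : x_n ≥ γ_n + 1} ∪ {x ∈ conv(K^≥) : x_n ≤ θ_n − 1}, and this set equals conv(K^≤) ∩ conv(K^≥). -/

import Mathlib

/-!
Superincreasing weights make the last coordinate decisive: a box point with
`x_n ≤ θ_n - 1 = u_n - 1` lies in `K^≤`, and one with `x_n ≥ γ_n + 1` lies in `K^≥`, so the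
slab `γ_n + 1 ≤ x_n ≤ θ_n - 1` of the box lies in `K^≤ ∩ K^≥`. Write `y ∈ conv K^≤` with
`y_n ≥ γ_n + 1` as a convex combination of points `x` of `K^≤`, and move each `x` along the last
axis to `x_n = γ_n + 1` and to `x_n = max x_n (θ_n - 1)`: both moved points lie in `K^≤ ∩ K^≥`,
and the two averages of moved points bracket `y_n` on the same axis-parallel line through `y`.
Hence `y ∈ conv (K^≤ ∩ K^≥)`; symmetrically for `conv K^≥`, and as `γ_n + 1 ≤ θ_n - 1` every
point of `conv K^≤ ∩ conv K^≥` is caught by one of the two cases.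
-/

/-- Embedding of integer vectors into real vectors. -/
noncomputable def toReal {n : ℕ} (x : Fin n → ℤ) : Fin n → ℝ := fun i => (x i : ℝ)

open Finset Function

section UpdateCoordinate

variable {ι : Type*} [DecidableEq ι]

lemma sum_smul_update {R κ : Type*} [Semiring R] (t : Finset κ) (c : κ → R)
    (z : κ → ι → R) (m : ι) (s : κ → R) :
    ∑ k ∈ t, c k • update (z k) m (s k) = update (∑ k ∈ t, c k • z k) m (∑ k ∈ t, c k * s k) := by
  funext j
  by_cases hj : j = m
  · subst hj
    simp [Finset.sum_apply]
  · simp [Finset.sum_apply, update_of_ne hj]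

lemma Convex.setOf_update_mem {C : Set (ι → ℝ)} (hC : Convex ℝ C) (y : ι → ℝ) (m : ι) :
    Convex ℝ {t : ℝ | update y m t ∈ C} := by
  intro s hs r hr α β hα hβ hαβ
  convert hC hs hr hα hβ hαβ using 1
  rw [← update_smul, ← update_smul, ← update_add, ← add_smul, hαβ, one_smul]
  rfl

lemma Convex.sum_smul_mem_of_update_mem {κ : Type*} [Fintype κ] {C : Set (ι → ℝ)}
    (hC : Convex ℝ C) {c : κ → ℝ} (hc₀ : ∀ k, 0 ≤ c k) (hc₁ : ∑ k, c k = 1) {z : κ → ι → ℝ}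
    {m : ι} {lo hi : κ → ℝ} (hloC : ∀ k, update (z k) m (lo k) ∈ C)
    (hhiC : ∀ k, update (z k) m (hi k) ∈ C)
    (hlo : ∑ k, c k * lo k ≤ (∑ k, c k • z k) m) (hhi : (∑ k, c k • z k) m ≤ ∑ k, c k * hi k) :
    ∑ k, c k • z k ∈ C := by
  have hT := hC.setOf_update_mem (∑ k, c k • z k) m
  have hL : ∑ k, c k * lo k ∈ {t : ℝ | update (∑ k, c k • z k) m t ∈ C} := by
    rw [Set.mem_ofPred_eq, ← sum_smul_update]
    exact hC.sum_mem (fun k _ => hc₀ k) hc₁ (fun k _ => hloC k)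
  have hH : ∑ k, c k * hi k ∈ {t : ℝ | update (∑ k, c k • z k) m t ∈ C} := by
    rw [Set.mem_ofPred_eq, ← sum_smul_update]
    exact hC.sum_mem (fun k _ => hc₀ k) hc₁ (fun k _ => hhiC k)
  have hy := hT.ordConnected.out hL hH ⟨hlo, hhi⟩
  rwa [Set.mem_ofPred_eq, update_eq_self] at hy

lemma Convex.mem_of_mem_convexHull_of_const_le {C S : Set (ι → ℝ)} (hC : Convex ℝ C) {m : ι}
    {c : ℝ} {hi : (ι → ℝ) → ℝ} (hle : ∀ x ∈ S, x m ≤ hi x)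
    (hcC : ∀ x ∈ S, update x m c ∈ C) (hhiC : ∀ x ∈ S, update x m (hi x) ∈ C)
    {y : ι → ℝ} (hy : y ∈ convexHull ℝ S) (hcy : c ≤ y m) : y ∈ C := by
  obtain ⟨κ, _, w, z, hw₀, hw₁, hz, rfl⟩ := mem_convexHull_iff_exists_fintype.mp hy
  refine hC.sum_smul_mem_of_update_mem hw₀ hw₁ (fun k => hcC _ (hz k)) (fun k => hhiC _ (hz k))
    (by rwa [← sum_mul, hw₁, one_mul]) ?_
  rw [Finset.sum_apply]
  exact sum_le_sum fun k _ => mul_le_mul_of_nonneg_left (hle _ (hz k)) (hw₀ k)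

lemma Convex.mem_of_mem_convexHull_of_le_const {C S : Set (ι → ℝ)} (hC : Convex ℝ C) {m : ι}
    {c : ℝ} {lo : (ι → ℝ) → ℝ} (hle : ∀ x ∈ S, lo x ≤ x m)
    (hloC : ∀ x ∈ S, update x m (lo x) ∈ C) (hcC : ∀ x ∈ S, update x m c ∈ C)
    {y : ι → ℝ} (hy : y ∈ convexHull ℝ S) (hyc : y m ≤ c) : y ∈ C := by
  obtain ⟨κ, _, w, z, hw₀, hw₁, hz, rfl⟩ := mem_convexHull_iff_exists_fintype.mp hy
  refine hC.sum_smul_mem_of_update_mem hw₀ hw₁ (fun k => hloC _ (hz k)) (fun k => hcC _ (hz k))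
    ?_ (by rwa [← sum_mul, hw₁, one_mul])
  rw [Finset.sum_apply]
  exact sum_le_sum fun k _ => mul_le_mul_of_nonneg_left (hle _ (hz k)) (hw₀ k)

end UpdateCoordinate

section IntegerBox

variable {n : ℕ}

def rect (u : Fin n → ℤ) : Set (Fin n → ℤ) := {x | ∀ i, 0 ≤ x i ∧ x i ≤ u i}

lemma toReal_update (x : Fin n → ℤ) (m : Fin n) (v : ℤ) :
    toReal (update x m v) = update (toReal x) m (v : ℝ) := by
  funext j
  by_cases h : j = m <;> simp [toReal, h]

lemma update_toReal_mem_convexHull {S : Set (Fin n → ℤ)} {x : Fin n → ℤ} {m : Fin n} {v : ℤ}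
    (h : update x m v ∈ S) : update (toReal x) m (v : ℝ) ∈ convexHull ℝ (toReal '' S) :=
  subset_convexHull ℝ _ ⟨_, h, toReal_update x m v⟩

lemma update_mem_rect {u x : Fin n → ℤ} (hx : x ∈ rect u) {m : Fin n} {v : ℤ} (hv₀ : 0 ≤ v)
    (hvu : v ≤ u m) : update x m v ∈ rect u := by
  intro i
  rcases eq_or_ne i m with rfl | h
  · simpa using ⟨hv₀, hvu⟩
  · simpa [h] using hx i

variable {u : Fin n → ℤ} {P Q : (Fin n → ℤ) → Prop} {m : Fin n} {p q : ℤ}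

lemma update_mem_of_mem_Icc (hq : 0 ≤ q) (hpu : p ≤ u m)
    (hP : ∀ x ∈ rect u, x m ≤ p → P x) (hQ : ∀ x ∈ rect u, q ≤ x m → Q x)
    {x : Fin n → ℤ} (hx : x ∈ rect u) {v : ℤ} (hv : v ∈ Set.Icc q p) :
    update x m v ∈ {x | x ∈ rect u ∧ P x ∧ Q x} := by
  have hx' := update_mem_rect hx (m := m) (hq.trans hv.1) (hv.2.trans hpu)
  exact ⟨hx', hP _ hx' (by simpa using hv.2), hQ _ hx' (by simpa using hv.1)⟩

lemma mem_convexHull_inter_of_le_apply (hq : 0 ≤ q) (hqp : q ≤ p) (hpu : p ≤ u m)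
    (hP : ∀ x ∈ rect u, x m ≤ p → P x) (hQ : ∀ x ∈ rect u, q ≤ x m → Q x)
    {y : Fin n → ℝ} (hy : y ∈ convexHull ℝ (toReal '' {x | x ∈ rect u ∧ P x}))
    (hqy : (q : ℝ) ≤ y m) : y ∈ convexHull ℝ (toReal '' {x | x ∈ rect u ∧ P x ∧ Q x}) := by
  refine (convex_convexHull ℝ _).mem_of_mem_convexHull_of_const_le (hi := fun y => max (y m) p)
    (fun _ _ => le_max_left _ _) ?_ ?_ hy hqy
  · rintro _ ⟨x, hx, rfl⟩
    exact update_toReal_mem_convexHull (update_mem_of_mem_Icc hq hpu hP hQ hx.1 ⟨le_rfl, hqp⟩)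
  · rintro _ ⟨x, hx, rfl⟩
    have hmax : max (toReal x m) (p : ℝ) = ((max (x m) p : ℤ) : ℝ) := by simp [toReal]
    rw [hmax]
    apply update_toReal_mem_convexHull
    rcases le_total p (x m) with hpx | hxp
    · rw [max_eq_left hpx, update_eq_self]
      exact ⟨hx.1, hx.2, hQ x hx.1 (hqp.trans hpx)⟩
    · rw [max_eq_right hxp]
      exact update_mem_of_mem_Icc hq hpu hP hQ hx.1 ⟨hqp, le_rfl⟩

lemma mem_convexHull_inter_of_apply_le (hq : 0 ≤ q) (hqp : q ≤ p) (hpu : p ≤ u m)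
    (hP : ∀ x ∈ rect u, x m ≤ p → P x) (hQ : ∀ x ∈ rect u, q ≤ x m → Q x)
    {y : Fin n → ℝ} (hy : y ∈ convexHull ℝ (toReal '' {x | x ∈ rect u ∧ Q x}))
    (hyp : y m ≤ (p : ℝ)) : y ∈ convexHull ℝ (toReal '' {x | x ∈ rect u ∧ P x ∧ Q x}) := by
  refine (convex_convexHull ℝ _).mem_of_mem_convexHull_of_le_const (lo := fun y => min (y m) q)
    (fun _ _ => min_le_left _ _) ?_ ?_ hy hyp
  · rintro _ ⟨x, hx, rfl⟩
    have hmin : min (toReal x m) (q : ℝ) = ((min (x m) q : ℤ) : ℝ) := by simp [toReal]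
    rw [hmin]
    apply update_toReal_mem_convexHull
    rcases le_total (x m) q with hxq | hqx
    · rw [min_eq_left hxq, update_eq_self]
      exact ⟨hx.1, hP x hx.1 (hxq.trans hqp), hx.2⟩
    · rw [min_eq_right hqx]
      exact update_mem_of_mem_Icc hq hpu hP hQ hx.1 ⟨le_rfl, hqp⟩
  · rintro _ ⟨x, hx, rfl⟩
    exact update_toReal_mem_convexHull (update_mem_of_mem_Icc hq hpu hP hQ hx.1 ⟨hqp, le_rfl⟩)

theorem convexHull_rect_inter_eq (hq : 0 ≤ q) (hqp : q ≤ p) (hpu : p ≤ u m)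
    (hP : ∀ x ∈ rect u, x m ≤ p → P x) (hQ : ∀ x ∈ rect u, q ≤ x m → Q x) :
    convexHull ℝ (toReal '' {x | x ∈ rect u ∧ P x ∧ Q x}) =
        {y | y ∈ convexHull ℝ (toReal '' {x | x ∈ rect u ∧ P x}) ∧ (q : ℝ) ≤ y m} ∪
          {y | y ∈ convexHull ℝ (toReal '' {x | x ∈ rect u ∧ Q x}) ∧ y m ≤ (p : ℝ)} ∧
      {y | y ∈ convexHull ℝ (toReal '' {x | x ∈ rect u ∧ P x}) ∧ (q : ℝ) ≤ y m} ∪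
          {y | y ∈ convexHull ℝ (toReal '' {x | x ∈ rect u ∧ Q x}) ∧ y m ≤ (p : ℝ)} =
        convexHull ℝ (toReal '' {x | x ∈ rect u ∧ P x}) ∩
          convexHull ℝ (toReal '' {x | x ∈ rect u ∧ Q x}) := by
  have hunion : {y | y ∈ convexHull ℝ (toReal '' {x | x ∈ rect u ∧ P x}) ∧ (q : ℝ) ≤ y m} ∪
      {y | y ∈ convexHull ℝ (toReal '' {x | x ∈ rect u ∧ Q x}) ∧ y m ≤ (p : ℝ)} ⊆
      convexHull ℝ (toReal '' {x | x ∈ rect u ∧ P x ∧ Q x}) := by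
    rintro y (⟨hy, hqy⟩ | ⟨hy, hyp⟩)
    · exact mem_convexHull_inter_of_le_apply hq hqp hpu hP hQ hy hqy
    · exact mem_convexHull_inter_of_apply_le hq hqp hpu hP hQ hy hyp
  have hinter : convexHull ℝ (toReal '' {x | x ∈ rect u ∧ P x ∧ Q x}) ⊆
      convexHull ℝ (toReal '' {x | x ∈ rect u ∧ P x}) ∩
        convexHull ℝ (toReal '' {x | x ∈ rect u ∧ Q x}) :=
    Set.subset_inter (convexHull_mono (Set.image_mono fun x hx => ⟨hx.1, hx.2.1⟩))
      (convexHull_mono (Set.image_mono fun x hx => ⟨hx.1, hx.2.2⟩))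
  have hsplit : convexHull ℝ (toReal '' {x | x ∈ rect u ∧ P x}) ∩
      convexHull ℝ (toReal '' {x | x ∈ rect u ∧ Q x}) ⊆
      {y | y ∈ convexHull ℝ (toReal '' {x | x ∈ rect u ∧ P x}) ∧ (q : ℝ) ≤ y m} ∪
        {y | y ∈ convexHull ℝ (toReal '' {x | x ∈ rect u ∧ Q x}) ∧ y m ≤ (p : ℝ)} := by
    rintro y ⟨hyP, hyQ⟩
    rcases le_total (q : ℝ) (y m) with hqy | hyq
    · exact Or.inl ⟨hyP, hqy⟩
    · exact Or.inr ⟨hyQ, hyq.trans (by exact_mod_cast hqp)⟩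
  exact ⟨(hinter.trans hsplit).antisymm hunion, (hunion.trans hinter).antisymm hsplit⟩

end IntegerBox

section Knapsack

lemma sum_eq_sum_Iio_add_of_isTop {α M : Type*} [Fintype α] [PartialOrder α]
    [LocallyFiniteOrderBot α] [AddCommMonoid M] {a : α} (ha : IsTop a) (f : α → M) :
    ∑ x, f x = ∑ x ∈ Iio a, f x + f a := by
  rw [sum_Iio_add_eq_sum_Iic, Finset.eq_univ_of_forall fun x => mem_Iic.2 (ha x)]

variable {n : ℕ}

lemma sum_Iio_mul_le_of_superincreasing {c u : Fin n → ℤ}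
    (hsi : ∀ i j : Fin n, (j : ℕ) = (i : ℕ) + 1 → ∑ k ∈ Iic i, c k * u k ≤ c j)
    (j : Fin n) (hj : 0 ≤ c j) : ∑ k ∈ Iio j, c k * u k ≤ c j := by
  rcases Nat.eq_zero_or_pos j with h | h
  · rwa [Finset.Iio_eq_empty.2 fun k _ => Fin.le_def.2 (by omega), sum_empty]
  · have hIic : Iic (⟨j - 1, by omega⟩ : Fin n) = Iio j := by
      ext k
      simp only [mem_Iic, mem_Iio, Fin.le_def, Fin.lt_def]
      omega
    simpa [hIic] using hsi ⟨j - 1, by omega⟩ j (by simp; omega)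

variable {lst : Fin n}

lemma greedy_eq_upper_of_isTop (hlst : IsTop lst) {a u θ : Fin n → ℤ} {b : ℤ} (ha : 0 < a lst)
    (hub : a lst * u lst ≤ b)
    (hθ : θ lst = min (u lst) ((b - ∑ k ∈ Ioi lst, a k * θ k).fdiv (a lst))) :
    θ lst = u lst := by
  rw [hθ, hlst.isMax.finsetIoi_eq, sum_empty, sub_zero, min_eq_left_iff,
    Int.fdiv_eq_ediv_of_nonneg _ ha.le, Int.le_ediv_iff_mul_le ha, mul_comm]
  exact hub

lemma nonneg_and_le_mul_add_one_of_minimalPacking (hlst : IsTop lst) {w u γ : Fin n → ℤ} {d : ℤ}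
    (hw : 0 < w lst) (hsup : ∑ k ∈ Iio lst, w k * u k ≤ w lst)
    (hγ : γ lst = u lst - min (u lst)
      (((∑ k, w k * u k) - d - ∑ k ∈ Ioi lst, w k * (u k - γ k)).fdiv (w lst))) :
    0 ≤ γ lst ∧ d ≤ w lst * (γ lst + 1) := by
  rw [hlst.isMax.finsetIoi_eq, sum_empty, sub_zero, Int.fdiv_eq_ediv_of_nonneg _ hw.le] at hγ
  set r := ((∑ k, w k * u k) - d) / w lst
  have hr : r * w lst ≤ (∑ k, w k * u k) - d := Int.ediv_mul_le _ hw.ne'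
  have hsum := sum_eq_sum_Iio_add_of_isTop hlst fun k => w k * u k
  refine ⟨by have := min_le_left (u lst) r; omega, ?_⟩
  have hur : u lst - γ lst ≤ r := by have := min_le_right (u lst) r; omega
  nlinarith [mul_le_mul_of_nonneg_left hur hw.le]

lemma sum_mul_le_of_apply_le_sub_one (hlst : IsTop lst) {a u x : Fin n → ℤ} {b : ℤ}
    (ha : ∀ i, 0 ≤ a i) (hsup : ∑ k ∈ Iio lst, a k * u k ≤ a lst) (hub : a lst * u lst ≤ b)
    (hxu : ∀ i, x i ≤ u i) (hx : x lst ≤ u lst - 1) : ∑ i, a i * x i ≤ b := by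
  have hle : ∑ k ∈ Iio lst, a k * x k ≤ ∑ k ∈ Iio lst, a k * u k :=
    sum_le_sum fun k _ => mul_le_mul_of_nonneg_left (hxu k) (ha k)
  rw [sum_eq_sum_Iio_add_of_isTop hlst]
  nlinarith [mul_le_mul_of_nonneg_left hx (ha lst)]

lemma le_sum_mul_of_le_apply {ι : Type*} [Fintype ι] {w x : ι → ℤ} {d g : ℤ} {m : ι}
    (hw : ∀ i, 0 ≤ w i) (hx : ∀ i, 0 ≤ x i) (hd : d ≤ w m * g) (hg : g ≤ x m) :
    d ≤ ∑ i, w i * x i :=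
  calc d ≤ w m * x m := hd.trans (mul_le_mul_of_nonneg_left hg (hw m))
    _ ≤ ∑ i, w i * x i :=
      single_le_sum (f := fun i => w i * x i) (fun i _ => mul_nonneg (hw i) (hx i)) (mem_univ m)

end Knapsack

theorem stmt_16_general {n : ℕ} (a w u : Fin n → ℤ)
    (ha : ∀ i, 0 < a i) (hw : ∀ i, 0 < w i)
    (hsia : ∀ i j : Fin n, (j : ℕ) = (i : ℕ) + 1 →
      ∑ k ∈ Finset.Iic i, a k * u k ≤ a j)
    (hsiw : ∀ i j : Fin n, (j : ℕ) = (i : ℕ) + 1 →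
      ∑ k ∈ Finset.Iic i, w k * u k ≤ w j)
    (b d : ℤ)
    (hub : ∀ i, a i * u i ≤ b)
    (θ : Fin n → ℤ)
    (hθ : ∀ i : Fin n,
      θ i = min (u i) ((b - ∑ k ∈ Finset.Ioi i, a k * θ k).fdiv (a i)))
    (γ : Fin n → ℤ)
    (hγ : ∀ i : Fin n, γ i = u i - min (u i)
      (((∑ k, w k * u k) - d - ∑ k ∈ Finset.Ioi i, w k * (u k - γ k)).fdiv (w i)))
    (lst : Fin n) (hlst : (lst : ℕ) = n - 1)
    (h2 : γ lst ≤ θ lst - 2) :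
    convexHull ℝ (toReal ''
        {x : Fin n → ℤ | (∀ i, 0 ≤ x i ∧ x i ≤ u i) ∧
          ∑ i, a i * x i ≤ b ∧ d ≤ ∑ i, w i * x i}) =
      ({y : Fin n → ℝ | y ∈ convexHull ℝ (toReal ''
            {x : Fin n → ℤ | (∀ i, 0 ≤ x i ∧ x i ≤ u i) ∧ ∑ i, a i * x i ≤ b}) ∧
          (γ lst : ℝ) + 1 ≤ y lst} ∪
        {y : Fin n → ℝ | y ∈ convexHull ℝ (toReal ''
            {x : Fin n → ℤ | (∀ i, 0 ≤ x i ∧ x i ≤ u i) ∧ d ≤ ∑ i, w i * x i}) ∧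
          y lst ≤ (θ lst : ℝ) - 1}) ∧
    ({y : Fin n → ℝ | y ∈ convexHull ℝ (toReal ''
          {x : Fin n → ℤ | (∀ i, 0 ≤ x i ∧ x i ≤ u i) ∧ ∑ i, a i * x i ≤ b}) ∧
        (γ lst : ℝ) + 1 ≤ y lst} ∪
      {y : Fin n → ℝ | y ∈ convexHull ℝ (toReal ''
          {x : Fin n → ℤ | (∀ i, 0 ≤ x i ∧ x i ≤ u i) ∧ d ≤ ∑ i, w i * x i}) ∧
        y lst ≤ (θ lst : ℝ) - 1}) =
      convexHull ℝ (toReal ''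
          {x : Fin n → ℤ | (∀ i, 0 ≤ x i ∧ x i ≤ u i) ∧ ∑ i, a i * x i ≤ b}) ∩
        convexHull ℝ (toReal ''
          {x : Fin n → ℤ | (∀ i, 0 ≤ x i ∧ x i ≤ u i) ∧ d ≤ ∑ i, w i * x i}) := by
  have hlast : IsTop lst := fun i => Fin.le_def.2 (by have := i.isLt; omega)
  have hθu := greedy_eq_upper_of_isTop hlast (ha lst) (hub lst) (hθ lst)
  obtain ⟨hγ₀, hdγ⟩ := nonneg_and_le_mul_add_one_of_minimalPacking hlast (hw lst)
    (sum_Iio_mul_le_of_superincreasing hsiw lst (hw lst).le) (hγ lst)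
  have key := convexHull_rect_inter_eq (u := u) (m := lst) (p := θ lst - 1) (q := γ lst + 1)
    (P := fun x => ∑ i, a i * x i ≤ b) (Q := fun x => d ≤ ∑ i, w i * x i)
    (by omega) (by omega) (by omega)
    (fun x hx hxl => sum_mul_le_of_apply_le_sub_one hlast (fun i => (ha i).le)
      (sum_Iio_mul_le_of_superincreasing hsia lst (ha lst).le) (hub lst) (fun i => (hx i).2)
      (by omega))
    (fun x hx hxl => le_sum_mul_of_le_apply (fun i => (hw i).le) (fun i => (hx i).1) hdγ hxl)
  push_cast at key
  exact key

/-- in the two-knapsack setting with `γ_n ≤ θ_n − 2`, the convex hull of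
`K^≤ ∩ K^≥` equals the union `{x ∈ conv K^≤ : x_n ≥ γ_n + 1} ∪
{x ∈ conv K^≥ : x_n ≤ θ_n − 1}`, and this set equals `conv K^≤ ∩ conv K^≥`. -/
theorem stmt_16 {n : ℕ} (hn : 1 ≤ n)
    (a w u : Fin n → ℤ)
    (ha : ∀ i, 0 < a i) (hw : ∀ i, 0 < w i) (hu : ∀ i, 1 ≤ u i)
    (hsia : ∀ i j : Fin n, (j : ℕ) = (i : ℕ) + 1 →
      ∑ k ∈ Finset.Iic i, a k * u k ≤ a j)
    (hsiw : ∀ i j : Fin n, (j : ℕ) = (i : ℕ) + 1 →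
      ∑ k ∈ Finset.Iic i, w k * u k ≤ w j)
    (b d : ℤ) (hb : 0 < b) (hd : 0 < d)
    (hub : ∀ i, a i * u i ≤ b) (hdle : d ≤ ∑ i, w i * u i)
    (hgt : b < ∑ i, a i * u i)
    (θ : Fin n → ℤ)
    (hθ : ∀ i : Fin n,
      θ i = min (u i) ((b - ∑ k ∈ Finset.Ioi i, a k * θ k).fdiv (a i)))
    (γ : Fin n → ℤ)
    (hγ : ∀ i : Fin n, γ i = u i - min (u i)
      (((∑ k, w k * u k) - d - ∑ k ∈ Finset.Ioi i, w k * (u k - γ k)).fdiv (w i)))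
    (lst : Fin n) (hlst : (lst : ℕ) = n - 1)
    (h1 : d ≤ ∑ i ∈ Finset.Iio lst, w i * u i + (θ lst - 1) * w lst)
    (h2 : γ lst ≤ θ lst - 2) :
    convexHull ℝ (toReal ''
        {x : Fin n → ℤ | (∀ i, 0 ≤ x i ∧ x i ≤ u i) ∧
          ∑ i, a i * x i ≤ b ∧ d ≤ ∑ i, w i * x i}) =
      ({y : Fin n → ℝ | y ∈ convexHull ℝ (toReal ''
            {x : Fin n → ℤ | (∀ i, 0 ≤ x i ∧ x i ≤ u i) ∧ ∑ i, a i * x i ≤ b}) ∧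
          (γ lst : ℝ) + 1 ≤ y lst} ∪
        {y : Fin n → ℝ | y ∈ convexHull ℝ (toReal ''
            {x : Fin n → ℤ | (∀ i, 0 ≤ x i ∧ x i ≤ u i) ∧ d ≤ ∑ i, w i * x i}) ∧
          y lst ≤ (θ lst : ℝ) - 1}) ∧
    ({y : Fin n → ℝ | y ∈ convexHull ℝ (toReal ''
          {x : Fin n → ℤ | (∀ i, 0 ≤ x i ∧ x i ≤ u i) ∧ ∑ i, a i * x i ≤ b}) ∧
        (γ lst : ℝ) + 1 ≤ y lst} ∪
      {y : Fin n → ℝ | y ∈ convexHull ℝ (toReal ''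
          {x : Fin n → ℤ | (∀ i, 0 ≤ x i ∧ x i ≤ u i) ∧ d ≤ ∑ i, w i * x i}) ∧
        y lst ≤ (θ lst : ℝ) - 1}) =
      convexHull ℝ (toReal ''
          {x : Fin n → ℤ | (∀ i, 0 ≤ x i ∧ x i ≤ u i) ∧ ∑ i, a i * x i ≤ b}) ∩
        convexHull ℝ (toReal ''
          {x : Fin n → ℤ | (∀ i, 0 ≤ x i ∧ x i ≤ u i) ∧ d ≤ ∑ i, w i * x i}) :=
  stmt_16_general a w u ha hw hsia hsiw b d hub θ hθ γ hγ lst hlst h2
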